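/- Let A be a square n×n complex matrix with Hartwig–Spindelböck decomposition A = T·[[Σ₁K₁, Σ₁L₁],[0,0]]·T^* (T unitary, Σ₁ nonsingular r×r, K₁K₁^* + L₁L₁^* = I_r), and let m be a positive integer. Then the m-weak group MP inverse satisfies A^{Ⓦ_m,†} = T·[[(Σ₁K₁)^{Ⓦ_m}, 0],[0, 0]]·T^*. -/

import Mathlib

open Matrix

/-- Index of a square matrix: least `d` with `rank (B^d) = rank (B^(d+1))`. -/
noncomputable def matInd {ι : Type*} [Fintype ι] [DecidableEq ι] (B : Matrix ι ι ℂ) : ℕ :=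
  sInf {d : ℕ | (B ^ d).rank = (B ^ (d + 1)).rank}

/-- `X` is the Moore-Penrose inverse of `A` (four Penrose equations). -/
noncomputable def IsMP {ι κ : Type*} [Fintype ι] [Fintype κ] (A : Matrix ι κ ℂ) (X : Matrix κ ι ℂ) : Prop :=
  A * X * A = A ∧ X * A * X = X ∧ (A * X)ᴴ = A * X ∧ (X * A)ᴴ = X * A

/-- Column space (range) of a matrix. -/
noncomputable def mrange {ι κ : Type*} [Fintype κ] (M : Matrix ι κ ℂ) : Submodule ℂ (ι → ℂ) :=
  LinearMap.range M.mulVecLin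

/-- Null space of a matrix. -/
noncomputable def mker {ι κ : Type*} [Fintype κ] (M : Matrix ι κ ℂ) : Submodule ℂ (κ → ℂ) :=
  LinearMap.ker M.mulVecLin

/-- `X` is the core-EP inverse of `B`. -/
noncomputable def IsCoreEP {ι : Type*} [Fintype ι] [DecidableEq ι] (B X : Matrix ι ι ℂ) : Prop :=
  X * B * X = X ∧ mrange X = mrange (B ^ matInd B) ∧ mrange Xᴴ = mrange (B ^ matInd B)

/-- `X` is the Drazin inverse of `B`. -/
noncomputable def IsDrazin {ι : Type*} [Fintype ι] [DecidableEq ι] (B X : Matrix ι ι ℂ) : Prop :=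
  X * B * X = X ∧ B * X = X * B ∧ B ^ (matInd B + 1) * X = B ^ matInd B

/-- `X` is the group inverse of `B`. -/
noncomputable def IsGroupInv {ι : Type*} [Fintype ι] (B X : Matrix ι ι ℂ) : Prop :=
  B * X * B = B ∧ X * B * X = X ∧ B * X = X * B

/-- Frobenius norm of a matrix. -/
noncomputable def frobNorm {ι κ : Type*} [Fintype ι] [Fintype κ] (M : Matrix ι κ ℂ) : ℝ :=
  Real.sqrt (∑ i, ∑ j, ‖M i j‖ ^ 2)

set_option linter.unusedSectionVars false
set_option maxHeartbeats 1000000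

section Helpers
variable {ι κ μ : Type*} [Fintype ι] [Fintype κ] [Fintype μ]

lemma mrange_mul (M : Matrix ι κ ℂ) (N : Matrix κ μ ℂ) :
    mrange (M * N) = (mrange N).map M.mulVecLin := by
  simp [mrange, Matrix.mulVecLin_mul, LinearMap.range_comp]

lemma mrange_mul_le (M : Matrix ι κ ℂ) (N : Matrix κ μ ℂ) :
    mrange (M * N) ≤ mrange M := by
  rw [mrange_mul]; exact LinearMap.map_le_range

lemma mrange_mul_of_rinv [DecidableEq κ] (M : Matrix ι κ ℂ) {N : Matrix κ μ ℂ} {N' : Matrix μ κ ℂ}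
    (h : N * N' = 1) : mrange (M * N) = mrange M := by
  refine le_antisymm (mrange_mul_le M N) ?_
  have : M = (M * N) * N' := by rw [Matrix.mul_assoc, h, Matrix.mul_one]
  conv_lhs => rw [this]
  exact mrange_mul_le _ _

lemma exists_factor {P : Matrix ι κ ℂ} {Q : Matrix ι μ ℂ} [DecidableEq κ]
    (h : mrange P ≤ mrange Q) : ∃ C : Matrix μ κ ℂ, P = Q * C := by
  have hcol : ∀ j : κ, ∃ c : μ → ℂ, Q.mulVec c = fun i => P i j := by
    intro j
    have : (fun i => P i j) ∈ mrange P := ⟨Pi.single j 1, by ext i; simp [Matrix.mulVecLin, Matrix.mulVec_single]⟩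
    exact h this
  choose c hc using hcol
  refine ⟨Matrix.of (fun k j => c j k), ?_⟩
  ext i j
  have := congrFun (hc j) i
  simpa [Matrix.mul_apply, Matrix.mulVec, dotProduct] using this.symm

lemma mul_eq_zero_of_mker_le {M : Matrix ι κ ℂ} {N : Matrix μ κ ℂ} {C : Matrix κ ι ℂ}
    (h : mker M ≤ mker N) (hc : M * C = 0) : N * C = 0 := by
  ext i j
  have hcol : (fun k => C k j) ∈ mker M := by
    ext1 i'
    have := congrFun (congrFun hc i') j
    simpa [Matrix.mul_apply, Matrix.mulVecLin, Matrix.mulVec, dotProduct] using this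
  have := congrFun (h hcol) i
  simpa [Matrix.mulVecLin, Matrix.mulVec, Matrix.mul_apply, dotProduct] using this

end Helpers

section Pow
variable {ι : Type*} [Fintype ι] [DecidableEq ι]


lemma matInd_spec (B : Matrix ι ι ℂ) :
    (B ^ matInd B).rank = (B ^ (matInd B + 1)).rank := by
  have hne : {d : ℕ | (B ^ d).rank = (B ^ (d + 1)).rank}.Nonempty := by
    by_contra hcon
    rw [Set.not_nonempty_iff_eq_empty] at hcon
    have hlt : ∀ d : ℕ, (B ^ (d + 1)).rank < (B ^ d).rank := by
      intro d
      have hle : (B ^ (d + 1)).rank ≤ (B ^ d).rank := by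
        rw [pow_succ]
        exact Matrix.rank_mul_le_left _ _
      have hne' : (B ^ d).rank ≠ (B ^ (d + 1)).rank := by
        intro h
        exact Set.eq_empty_iff_forall_notMem.mp hcon d h
      omega
    have key : ∀ k : ℕ, (B ^ k).rank + k ≤ (B ^ 0).rank := by
      intro k; induction k with
      | zero => simp
      | succ n ih => have := hlt n; omega
    have := key ((B ^ 0).rank + 1)
    omega
  exact Nat.sInf_mem hne

lemma mrange_rank (M : Matrix ι ι ℂ) : M.rank = Module.finrank ℂ (mrange M) := rfl

lemma mrange_pow_ind_succ (B : Matrix ι ι ℂ) :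
    mrange (B ^ (matInd B + 1)) = mrange (B ^ matInd B) := by
  have hle : mrange (B ^ (matInd B + 1)) ≤ mrange (B ^ matInd B) := by
    rw [pow_succ]; exact mrange_mul_le _ _
  exact Submodule.eq_of_le_of_finrank_le hle (le_of_eq (matInd_spec B))

lemma mrange_pow_stab (B : Matrix ι ι ℂ) : ∀ k, matInd B ≤ k →
    mrange (B ^ k) = mrange (B ^ matInd B) := by
  intro k hk
  induction k with
  | zero => rw [Nat.le_zero.mp hk]
  | succ n ih =>
    rcases Nat.lt_or_ge (matInd B) (n+1) with h | h
    · have hn : matInd B ≤ n := Nat.lt_succ_iff.mp h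
      calc mrange (B ^ (n + 1)) = (mrange (B ^ n)).map B.mulVecLin := by
            rw [← mrange_mul, ← pow_succ']
          _ = (mrange (B ^ matInd B)).map B.mulVecLin := by rw [ih hn]
          _ = mrange (B ^ (matInd B + 1)) := by rw [← mrange_mul, ← pow_succ']
          _ = mrange (B ^ matInd B) := mrange_pow_ind_succ B
    · have : matInd B = n + 1 := le_antisymm hk h
      rw [this]

lemma mker_pow_ind_succ (B : Matrix ι ι ℂ) :
    mker (B ^ matInd B) = mker (B ^ (matInd B + 1)) := by
  have hle : mker (B ^ matInd B) ≤ mker (B ^ (matInd B + 1)) := by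
    intro v hv
    have hv' : (B ^ matInd B).mulVec v = 0 := hv
    show (B ^ (matInd B + 1)).mulVec v = 0
    rw [pow_succ', ← Matrix.mulVec_mulVec, hv', Matrix.mulVec_zero]
  refine Submodule.eq_of_le_of_finrank_le hle ?_
  have h1 := LinearMap.finrank_range_add_finrank_ker (B ^ matInd B).mulVecLin
  have h2 := LinearMap.finrank_range_add_finrank_ker (B ^ (matInd B + 1)).mulVecLin
  have h3 := matInd_spec B
  rw [mrange_rank, mrange_rank] at h3
  unfold mrange at h3
  unfold mker
  omega

end Pow



section Unique
variable {ι : Type*} [Fintype ι] [DecidableEq ι]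

lemma mker_le_of_mrange_ct_le {P Q : Matrix ι ι ℂ} (h : mrange Qᴴ ≤ mrange Pᴴ) :
    mker P ≤ mker Q := by
  obtain ⟨C, hC⟩ := exists_factor h
  have hQ : Q = Cᴴ * P := by
    rw [← conjTranspose_conjTranspose Q, hC, conjTranspose_mul, conjTranspose_conjTranspose]
  intro v hv
  have hv' : P.mulVec v = 0 := hv
  show Q.mulVec v = 0
  rw [hQ, ← Matrix.mulVec_mulVec, hv', Matrix.mulVec_zero]

lemma mker_le_of_factor {P Q : Matrix ι ι ℂ} {C : Matrix ι ι ℂ} (hQ : Q = C * P) :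
    mker P ≤ mker Q := by
  intro v hv
  have hv' : P.mulVec v = 0 := hv
  show Q.mulVec v = 0
  rw [hQ, ← Matrix.mulVec_mulVec, hv', Matrix.mulVec_zero]

lemma mker_eq_of_idem {B X : Matrix ι ι ℂ}
    (hrk : Module.finrank ℂ (mrange (B * X)) = Module.finrank ℂ (mrange X)) :
    mker (B * X) = mker X := by
  have hle : mker X ≤ mker (B * X) := mker_le_of_factor rfl
  refine (Submodule.eq_of_le_of_finrank_le hle ?_).symm
  have h1 := LinearMap.finrank_range_add_finrank_ker (B * X).mulVecLin
  have h2 := LinearMap.finrank_range_add_finrank_ker X.mulVecLin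
  unfold mrange at hrk
  unfold mker
  omega

lemma coreEP_unique {B X Y : Matrix ι ι ℂ} (hX : IsCoreEP B X) (hY : IsCoreEP B Y) : X = Y := by
  obtain ⟨hX1, hX2, hX3⟩ := hX
  obtain ⟨hY1, hY2, hY3⟩ := hY
  set d := matInd B with hd
  have hrE : mrange (B * X) = mrange (B ^ d) := by
    rw [mrange_mul, hX2, ← mrange_mul, ← pow_succ', mrange_pow_ind_succ]
  have hrF : mrange (B * Y) = mrange (B ^ d) := by
    rw [mrange_mul, hY2, ← mrange_mul, ← pow_succ', mrange_pow_ind_succ]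
  have hEE : (B * X) * (B * X) = B * X := by
    calc (B * X) * (B * X) = B * (X * B * X) := by noncomm_ring
    _ = B * X := by rw [hX1]
  have hFF : (B * Y) * (B * Y) = B * Y := by
    calc (B * Y) * (B * Y) = B * (Y * B * Y) := by noncomm_ring
    _ = B * Y := by rw [hY1]
  -- E * F = F and F * E = E
  obtain ⟨C, hC⟩ := exists_factor (le_of_eq (hrF.trans hrE.symm))
  have hEF : (B * X) * (B * Y) = B * Y := by
    rw [hC, ← Matrix.mul_assoc, hEE]
  obtain ⟨C', hC'⟩ := exists_factor (le_of_eq (hrE.trans hrF.symm))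
  have hFE : (B * Y) * (B * X) = B * X := by
    rw [hC', ← Matrix.mul_assoc, hFF]
  -- kernels
  have hkEX : mker (B * X) = mker X := by
    apply mker_eq_of_idem
    rw [hrE, ← hX2]
  have hkFY : mker (B * Y) = mker Y := by
    apply mker_eq_of_idem
    rw [hrF, ← hY2]
  have hkXY : mker X = mker Y :=
    le_antisymm (mker_le_of_mrange_ct_le (le_of_eq (hY3.trans hX3.symm)))
      (mker_le_of_mrange_ct_le (le_of_eq (hX3.trans hY3.symm)))
  -- E = F
  have hE0 : (B * X) * ((B * X) - 1) = 0 := by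
    rw [Matrix.mul_sub, hEE, Matrix.mul_one, sub_self]
  have hF0 : (B * Y) * ((B * X) - 1) = 0 := by
    apply mul_eq_zero_of_mker_le _ hE0
    rw [hkEX, hkXY, ← hkFY]
  have hEFeq : B * X = B * Y := by
    have : (B * Y) * (B * X) - (B * Y) = 0 := by
      rw [← hF0, Matrix.mul_sub, Matrix.mul_one]
    rw [hFE] at this
    linear_combination (norm := noncomm_ring) this
  -- conclude X = Y
  obtain ⟨Cx, hCx⟩ := exists_factor (le_of_eq hX2)
  obtain ⟨Cy, hCy⟩ := exists_factor (le_of_eq hY2)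
  have hp : B ^ (d + 1) * (Cx - Cy) = 0 := by
    rw [Matrix.mul_sub, pow_succ', Matrix.mul_assoc, Matrix.mul_assoc, ← hCx, ← hCy, hEFeq,
      sub_self]
  have hq : B ^ d * (Cx - Cy) = 0 :=
    mul_eq_zero_of_mker_le (le_of_eq (mker_pow_ind_succ B).symm) hp
  rw [Matrix.mul_sub] at hq
  rw [hCx, hCy]
  linear_combination (norm := noncomm_ring) hq

end Unique

theorem stmt12 {r n' : ℕ}
    (T : Matrix (Fin r ⊕ Fin n') (Fin r ⊕ Fin n') ℂ)
    (hT : T * Tᴴ = 1 ∧ Tᴴ * T = 1)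
    (S₁ K₁ : Matrix (Fin r) (Fin r) ℂ) (L₁ : Matrix (Fin r) (Fin n') ℂ)
    (hS₁ : IsUnit S₁.det) (hKL : K₁ * K₁ᴴ + L₁ * L₁ᴴ = 1)
    (A : Matrix (Fin r ⊕ Fin n') (Fin r ⊕ Fin n') ℂ)
    (hA : A = T * Matrix.fromBlocks (S₁ * K₁) (S₁ * L₁) 0 0 * Tᴴ)
    (m : ℕ) (hm : 0 < m)
    (Adag : Matrix (Fin r ⊕ Fin n') (Fin r ⊕ Fin n') ℂ) (hAdag : IsMP A Adag)
    (Acep : Matrix (Fin r ⊕ Fin n') (Fin r ⊕ Fin n') ℂ) (hAcep : IsCoreEP A Acep)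
    (Ccep : Matrix (Fin r) (Fin r) ℂ) (hCcep : IsCoreEP (S₁ * K₁) Ccep) :
    Acep ^ (m + 1) * A ^ m * A * Adag =
      T * Matrix.fromBlocks (Ccep ^ (m + 1) * (S₁ * K₁) ^ m) 0 0 0 * Tᴴ := by
  obtain ⟨hTTc, hTT⟩ := hT
  set G := S₁ * K₁ with hG
  set Eb : Matrix (Fin r ⊕ Fin n') (Fin r) ℂ :=
    fromRows (1 : Matrix (Fin r) (Fin r) ℂ) (0 : Matrix (Fin n') (Fin r) ℂ) with hEb
  set U : Matrix (Fin r ⊕ Fin n') (Fin r) ℂ := T * Eb with hU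
  set V : Matrix (Fin r) (Fin r ⊕ Fin n') ℂ := fromCols G (S₁ * L₁) with hV
  have hEbH : Ebᴴ = fromCols (1 : Matrix (Fin r) (Fin r) ℂ) (0 : Matrix (Fin r) (Fin n') ℂ) := by
    rw [hEb, conjTranspose_fromRows_eq_fromCols_conjTranspose]
    simp
  have hEbE : Ebᴴ * Eb = 1 := by
    rw [hEbH, hEb, fromCols_mul_fromRows]
    simp
  have hUU : Uᴴ * U = 1 := by
    rw [hU, conjTranspose_mul, Matrix.mul_assoc, ← Matrix.mul_assoc Tᴴ T Eb, hTT,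
      Matrix.one_mul, hEbE]
  have hEbVM : Eb * V = fromBlocks G (S₁ * L₁) 0 0 := by
    rw [hEb, hV, fromRows_mul_fromCols]
    simp
  have hA' : A = U * (V * Tᴴ) := by
    rw [hA, ← hEbVM, hU]
    simp only [Matrix.mul_assoc]
  have hVEb : V * Eb = G := by
    rw [hV, hEb, fromCols_mul_fromRows]
    simp
  have hVU : (V * Tᴴ) * U = G := by
    rw [hU, Matrix.mul_assoc V Tᴴ _, ← Matrix.mul_assoc Tᴴ T Eb, hTT, Matrix.one_mul, hVEb]
  have l1 : ∀ {p : Type} (X : Matrix (Fin r) p ℂ), Uᴴ * (U * X) = X := by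
    intro p X
    rw [← Matrix.mul_assoc, hUU, Matrix.one_mul]
  have l2 : ∀ {p : Type} (X : Matrix (Fin r) p ℂ), V * (Tᴴ * (U * X)) = G * X := by
    intro p X
    rw [← Matrix.mul_assoc, ← Matrix.mul_assoc, hVU]
  -- right inverse of V * Tᴴ
  have hVS : V * fromRows K₁ᴴ L₁ᴴ = S₁ := by
    rw [hV, fromCols_mul_fromRows, hG, Matrix.mul_assoc, Matrix.mul_assoc, ← Matrix.mul_add,
      hKL, Matrix.mul_one]
  have hrinv : (V * Tᴴ) * (T * (fromRows K₁ᴴ L₁ᴴ * S₁⁻¹)) = 1 := by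
    rw [Matrix.mul_assoc V Tᴴ _, ← Matrix.mul_assoc Tᴴ T _, hTT, Matrix.one_mul,
      ← Matrix.mul_assoc V _ _, hVS, Matrix.mul_nonsing_inv _ hS₁]
  -- powers of A
  have hApow : ∀ j : ℕ, A ^ (j + 1) = U * G ^ j * (V * Tᴴ) := by
    intro j
    induction j with
    | zero => rw [pow_one, pow_zero, Matrix.mul_one, hA']
    | succ n ih =>
      rw [pow_succ, ih, hA']
      simp only [Matrix.mul_assoc]
      rw [l2, ← Matrix.mul_assoc (G ^ n) G, ← pow_succ]
  have hmrA : ∀ j : ℕ, mrange (A ^ (j + 1)) = (mrange (G ^ j)).map U.mulVecLin := by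
    intro j
    rw [hApow j, mrange_mul_of_rinv _ hrinv, mrange_mul]
  -- range of A ^ matInd A
  have hrangeInd : mrange (A ^ matInd A) = (mrange (G ^ matInd G)).map U.mulVecLin := by
    set k := max (matInd A) (matInd G + 1) - 1 with hk
    have hk1 : matInd A ≤ k + 1 := by omega
    have hk2 : matInd G ≤ k := by omega
    rw [← mrange_pow_stab A (k + 1) hk1, hmrA k, mrange_pow_stab G k hk2]
  -- Y is the core-EP inverse of A
  set Y : Matrix (Fin r ⊕ Fin n') (Fin r ⊕ Fin n') ℂ := U * Ccep * Uᴴ with hY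
  obtain ⟨hC1, hC2, hC3⟩ := hCcep
  have l3 : ∀ {p : Type} (X : Matrix (Fin r) p ℂ), Ccep * (G * (Ccep * X)) = Ccep * X := by
    intro p X
    rw [← Matrix.mul_assoc, ← Matrix.mul_assoc, hC1]
  have hYcep : IsCoreEP A Y := by
    refine ⟨?_, ?_, ?_⟩
    · rw [hY, hA']
      simp only [Matrix.mul_assoc]
      rw [l1, l2, l3]
    · rw [hY, mrange_mul_of_rinv _ hUU, mrange_mul, hC2, hrangeInd]
    · have hYH : Yᴴ = U * Ccepᴴ * Uᴴ := by
        rw [hY]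
        simp only [conjTranspose_mul, conjTranspose_conjTranspose, Matrix.mul_assoc]
      rw [hYH, mrange_mul_of_rinv _ hUU, mrange_mul, hC3, hrangeInd]
  have hAY : Acep = Y := coreEP_unique hAcep hYcep
  -- A * Adag = U * Uᴴ
  obtain ⟨hD1, hD2, hD3, hD4⟩ := hAdag
  have hQA : (U * Uᴴ) * A = A := by
    conv_lhs => rw [hA']
    rw [hA']
    simp only [Matrix.mul_assoc]
    rw [l1]
  have hAZ : A * ((T * (fromRows K₁ᴴ L₁ᴴ * S₁⁻¹)) * Uᴴ) = U * Uᴴ := by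
    rw [hA']
    calc U * (V * Tᴴ) * ((T * (fromRows K₁ᴴ L₁ᴴ * S₁⁻¹)) * Uᴴ)
        = U * ((V * Tᴴ) * (T * (fromRows K₁ᴴ L₁ᴴ * S₁⁻¹)) * Uᴴ) := by
          simp only [Matrix.mul_assoc]
      _ = U * Uᴴ := by rw [hrinv, Matrix.one_mul]
  have hQP : (U * Uᴴ) * (A * Adag) = A * Adag := by
    rw [← Matrix.mul_assoc, hQA]
  have hPQ : (A * Adag) * (U * Uᴴ) = U * Uᴴ := by
    rw [← hAZ, ← Matrix.mul_assoc, hD1]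
  have hQH : (U * Uᴴ)ᴴ = U * Uᴴ := by
    rw [conjTranspose_mul, conjTranspose_conjTranspose]
  have hP : A * Adag = U * Uᴴ := by
    calc A * Adag = (A * Adag)ᴴ := hD3.symm
      _ = ((U * Uᴴ) * (A * Adag))ᴴ := by rw [hQP]
      _ = (A * Adag)ᴴ * (U * Uᴴ)ᴴ := by rw [conjTranspose_mul]
      _ = (A * Adag) * (U * Uᴴ) := by rw [hD3, hQH]
      _ = U * Uᴴ := hPQ
  -- powers of Y
  have hYpow : ∀ k : ℕ, Y ^ (k + 1) = U * Ccep ^ (k + 1) * Uᴴ := by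
    intro k
    induction k with
    | zero => rw [pow_one, pow_one, hY]
    | succ n ih =>
      rw [pow_succ, ih, hY]
      simp only [Matrix.mul_assoc]
      rw [l1, ← Matrix.mul_assoc (Ccep ^ (n + 1)) Ccep, ← pow_succ]
  -- final computation
  have hEbX : ∀ X : Matrix (Fin r) (Fin r) ℂ, Eb * X * Ebᴴ = fromBlocks X 0 0 0 := by
    intro X
    rw [hEb, hEbH, fromRows_mul, fromRows_mul_fromCols]
    simp
  have hsand : ∀ X : Matrix (Fin r) (Fin r) ℂ, T * (Eb * X * Ebᴴ) * Tᴴ = U * X * Uᴴ := by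
    intro X
    rw [hU, conjTranspose_mul]
    simp only [Matrix.mul_assoc]
  have hm1 : m - 1 + 1 = m := by omega
  have hAm : A ^ m = U * G ^ (m - 1) * (V * Tᴴ) := by
    have := hApow (m - 1)
    rwa [hm1] at this
  rw [hAY, hYpow m, hAm, Matrix.mul_assoc _ A Adag, hP, ← hEbX, hsand]
  simp only [Matrix.mul_assoc]
  rw [l1, l2, ← Matrix.mul_assoc (G ^ (m - 1)) G, ← pow_succ, hm1]
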